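/- arXiv:1205.1145 — 2 statements merged into one kernel-verified Lean document; each statement's English description precedes it below -/
import Mathlib

section
/- Let ABC be a nondegenerate triangle in the Euclidean plane with circumcenter O, circumradius R and semiperimeter s, and let P be a point with barycentric coordinates t₁:t₂:t₃ where t₁, t₂, t₃ > 0. Then R² − OP² ≥ 4s²·t₁t₂t₃/(t₁+t₂+t₃)³, with equality if and only if (t₁,t₂,t₃) is proportional to (a,b,c), i.e. if and only if P is the incenter I of the triangle. -/
/-!
Expanding `‖Σ tᵢ (Aᵢ - O)‖²` (Lagrange's identity) gives, for `T = t₁ + t₂ + t₃`,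
`R² - OP² = (t₂t₃a² + t₃t₁b² + t₁t₂c²) / T²`, so the claim becomes
`T (t₂t₃a² + t₃t₁b² + t₁t₂c²) ≥ (a + b + c)² t₁t₂t₃`. The difference of the two sides is
`t₃(a t₂ - b t₁)² + t₁(b t₃ - c t₂)² + t₂(c t₁ - a t₃)²`, which vanishes exactly when
`(t₁, t₂, t₃)` is proportional to `(a, b, c)`.
-/

section Lagrange

variable {V : Type*} [NormedAddCommGroup V] [InnerProductSpace ℝ V]

theorem norm_smul_add_smul_add_smul_sq (t₁ t₂ t₃ : ℝ) (u v w : V) :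
    ‖t₁ • u + t₂ • v + t₃ • w‖ ^ 2 =
      (t₁ + t₂ + t₃) * (t₁ * ‖u‖ ^ 2 + t₂ * ‖v‖ ^ 2 + t₃ * ‖w‖ ^ 2) -
        (t₂ * t₃ * ‖v - w‖ ^ 2 + t₃ * t₁ * ‖w - u‖ ^ 2 + t₁ * t₂ * ‖u - v‖ ^ 2) := by
  simp only [← real_inner_self_eq_norm_sq, inner_add_left, inner_add_right, inner_sub_left,
    inner_sub_right, real_inner_smul_left, real_inner_smul_right]
  rw [real_inner_comm v u, real_inner_comm w u, real_inner_comm w v]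
  ring

theorem sq_sub_dist_sq_eq_of_barycentric {A B C O P : V} {R t₁ t₂ t₃ : ℝ}
    (hOA : dist O A = R) (hOB : dist O B = R) (hOC : dist O C = R)
    (ht : t₁ + t₂ + t₃ ≠ 0)
    (hP : (t₁ + t₂ + t₃) • (P - O) = t₁ • (A - O) + t₂ • (B - O) + t₃ • (C - O)) :
    R ^ 2 - dist O P ^ 2 =
      (t₂ * t₃ * dist B C ^ 2 + t₃ * t₁ * dist C A ^ 2 + t₁ * t₂ * dist A B ^ 2) /
        (t₁ + t₂ + t₃) ^ 2 := by
  have hnorm := congrArg (‖·‖ ^ 2) hP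
  simp only [norm_smul, mul_pow, Real.norm_eq_abs, sq_abs,
    norm_smul_add_smul_add_smul_sq, sub_sub_sub_cancel_right, ← dist_eq_norm] at hnorm
  rw [dist_comm O] at hOA hOB hOC
  rw [hOA, hOB, hOC] at hnorm
  rw [dist_comm O, eq_div_iff (pow_ne_zero 2 ht)]
  linear_combination -hnorm

end Lagrange

theorem sq_sum_mul_prod_le_sum_mul_weighted_sq {a b c t₁ t₂ t₃ : ℝ}
    (ht₁ : 0 ≤ t₁) (ht₂ : 0 ≤ t₂) (ht₃ : 0 ≤ t₃) :
    (a + b + c) ^ 2 * (t₁ * t₂ * t₃) ≤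
      (t₁ + t₂ + t₃) * (t₂ * t₃ * a ^ 2 + t₃ * t₁ * b ^ 2 + t₁ * t₂ * c ^ 2) := by
  nlinarith [mul_nonneg ht₃ (sq_nonneg (a * t₂ - b * t₁)),
    mul_nonneg ht₁ (sq_nonneg (b * t₃ - c * t₂)), mul_nonneg ht₂ (sq_nonneg (c * t₁ - a * t₃))]

theorem sum_mul_weighted_sq_eq_sq_sum_mul_prod_iff {a b c t₁ t₂ t₃ : ℝ} (habc : 0 < a + b + c)
    (ht₁ : 0 < t₁) (ht₂ : 0 < t₂) (ht₃ : 0 < t₃) :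
    (t₁ + t₂ + t₃) * (t₂ * t₃ * a ^ 2 + t₃ * t₁ * b ^ 2 + t₁ * t₂ * c ^ 2) =
        (a + b + c) ^ 2 * (t₁ * t₂ * t₃) ↔
      ∃ k : ℝ, 0 < k ∧ t₁ = k * a ∧ t₂ = k * b ∧ t₃ = k * c := by
  constructor
  · intro h
    have hsos : t₃ * (a * t₂ - b * t₁) ^ 2 + t₁ * (b * t₃ - c * t₂) ^ 2 +
        t₂ * (c * t₁ - a * t₃) ^ 2 = 0 := by linear_combination h
    have h₁ := mul_nonneg ht₃.le (sq_nonneg (a * t₂ - b * t₁))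
    have h₂ := mul_nonneg ht₁.le (sq_nonneg (b * t₃ - c * t₂))
    have h₃ := mul_nonneg ht₂.le (sq_nonneg (c * t₁ - a * t₃))
    have e₁ : a * t₂ = b * t₁ := by
      simpa [ht₃.ne', sub_eq_zero] using (by linarith : t₃ * (a * t₂ - b * t₁) ^ 2 = 0)
    have e₃ : c * t₁ = a * t₃ := by
      simpa [ht₂.ne', sub_eq_zero] using (by linarith : t₂ * (c * t₁ - a * t₃) ^ 2 = 0)
    have e₂ : b * t₃ = c * t₂ := by
      simpa [ht₁.ne', sub_eq_zero] using (by linarith : t₁ * (b * t₃ - c * t₂) ^ 2 = 0)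
    refine ⟨(t₁ + t₂ + t₃) / (a + b + c), by positivity, ?_, ?_, ?_⟩ <;>
      rw [div_mul_eq_mul_div, eq_div_iff habc.ne'] <;> linarith
  · rintro ⟨k, -, rfl, rfl, rfl⟩
    ring

/-- In a nondegenerate triangle `ABC` with circumcenter `O`, circumradius `R`
and semiperimeter `s`, if `P` has barycentric coordinates `t₁ : t₂ : t₃` with `t₁, t₂, t₃ > 0`,
then `R² − OP² ≥ 4s²·t₁t₂t₃/(t₁+t₂+t₃)³`, with equality iff `(t₁, t₂, t₃)` is proportional
to `(a, b, c)` (i.e. `P` is the incenter). -/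
theorem stmt_3 (A B C O P : EuclideanSpace ℝ (Fin 2)) (a b c s R t₁ t₂ t₃ : ℝ)
    (hABC : AffineIndependent ℝ ![A, B, C])
    (ha : a = dist B C) (hb : b = dist C A) (hc : c = dist A B)
    (hs : s = (a + b + c) / 2)
    (hOA : dist O A = R) (hOB : dist O B = R) (hOC : dist O C = R)
    (ht₁ : 0 < t₁) (ht₂ : 0 < t₂) (ht₃ : 0 < t₃)
    (hP : ∀ M : EuclideanSpace ℝ (Fin 2),
      (t₁ + t₂ + t₃) • (P - M) = t₁ • (A - M) + t₂ • (B - M) + t₃ • (C - M)) :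
    4 * s ^ 2 * t₁ * t₂ * t₃ / (t₁ + t₂ + t₃) ^ 3 ≤ R ^ 2 - dist O P ^ 2 ∧
      (R ^ 2 - dist O P ^ 2 = 4 * s ^ 2 * t₁ * t₂ * t₃ / (t₁ + t₂ + t₃) ^ 3 ↔
        ∃ k : ℝ, 0 < k ∧ t₁ = k * a ∧ t₂ = k * b ∧ t₃ = k * c) := by
  have hT : 0 < t₁ + t₂ + t₃ := by positivity
  have habc : 0 < a + b + c := by
    have hBC : B ≠ C := hABC.injective.ne (by decide : (1 : Fin 3) ≠ 2)
    have : 0 < a := ha ▸ dist_pos.2 hBC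
    linarith [hb ▸ dist_nonneg (x := C) (y := A), hc ▸ dist_nonneg (x := A) (y := B)]
  have h4s : 4 * s ^ 2 * t₁ * t₂ * t₃ = (a + b + c) ^ 2 * (t₁ * t₂ * t₃) := by
    rw [hs]; ring
  have hden : ∀ Q : ℝ, Q / (t₁ + t₂ + t₃) ^ 2 = (t₁ + t₂ + t₃) * Q / (t₁ + t₂ + t₃) ^ 3 := by
    intro Q; field_simp
  rw [sq_sub_dist_sq_eq_of_barycentric hOA hOB hOC hT.ne' (hP O), ← ha, ← hb, ← hc, h4s, hden,
    div_le_div_iff_of_pos_right (by positivity), div_left_inj' (by positivity)]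
  exact ⟨sq_sum_mul_prod_le_sum_mul_weighted_sq ht₁.le ht₂.le ht₃.le,
    sum_mul_weighted_sq_eq_sq_sum_mul_prod_iff habc ht₁ ht₂ ht₃⟩
end

section
/- Let ABC be a nondegenerate, non-equilateral triangle in the Euclidean plane with circumcenter O, circumradius R, inradius r and semiperimeter s; let G be its centroid and I its incenter. Then cos∠GOI = (6R² − s² − r² + 2Rr)/(2·√(9R² − 2s² + 2r² + 8Rr)·√(R² − 2Rr)). -/
/-!
With `x, y, z` the position vectors of `A, B, C` seen from `O`, the vectors `3 (G - O)` and
`2s (I - O)` are the combinations `x + y + z` and `a x + b y + c z`, and since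
`⟪x, y⟫ = R² - c²/2` and so on, every inner product of two such combinations is a symmetric
polynomial in `a, b, c` and `R`, hence a polynomial in `s`, `ab + bc + ca`, `abc` and `R`.
The identities `abc = 4Rrs` and `ab + bc + ca = s² + r² + 4Rr` turn these into polynomials in
`R, r, s`. The first is `abc = 4RS`, which comes from the vanishing of the Gram determinant of
three vectors in the plane; the second follows by expanding `r²s² = s(s-a)(s-b)(s-c)`.
-/

open EuclideanGeometry Module
open scoped RealInnerProductSpace

theorem Matrix.det_gram_eq_zero_of_finrank_lt {𝕜 E n : Type*} [RCLike 𝕜] [NormedAddCommGroup E]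
    [InnerProductSpace 𝕜 E] [FiniteDimensional 𝕜 E] [Fintype n] [DecidableEq n] {v : n → E}
    (h : finrank 𝕜 E < Fintype.card n) : (gram 𝕜 v).det = 0 := by
  by_contra hdet
  exact h.not_ge (linearIndependent_of_det_gram_ne_zero hdet).fintype_card_le_finrank

section TriangleIdentities

variable {a b c s R r : ℝ}

theorem heron_nonneg (hab : c ≤ a + b) (hbc : a ≤ b + c) (hca : b ≤ c + a)
    (hs : s = (a + b + c) / 2) : 0 ≤ s * (s - a) * (s - b) * (s - c) := by
  have h₀ : 0 ≤ s := by rw [hs]; linarith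
  have h₁ : 0 ≤ s - a := by rw [hs]; linarith
  have h₂ : 0 ≤ s - b := by rw [hs]; linarith
  have h₃ : 0 ≤ s - c := by rw [hs]; linarith
  positivity

theorem mul_mul_eq_four_mul_mul_mul (ha : 0 ≤ a) (hb : 0 ≤ b) (hc : 0 ≤ c) (hR : 0 ≤ R)
    (hs : s ≠ 0) (hr : r = √(s * (s - a) * (s - b) * (s - c)) / s)
    (hkey : (a * b * c) ^ 2 = 16 * R ^ 2 * (s * (s - a) * (s - b) * (s - c))) :
    a * b * c = 4 * R * r * s := calc
  a * b * c = √((a * b * c) ^ 2) := (Real.sqrt_sq (by positivity)).symm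
  _ = √((4 * R) ^ 2) * √(s * (s - a) * (s - b) * (s - c)) := by
    rw [hkey, ← Real.sqrt_mul (by positivity)]; ring_nf
  _ = 4 * R * r * s := by rw [Real.sqrt_sq (by positivity), hr]; field_simp

theorem mul_add_mul_add_mul_eq (hs : s = (a + b + c) / 2) (hs0 : s ≠ 0)
    (hr : (r * s) ^ 2 = s * (s - a) * (s - b) * (s - c)) (habc : a * b * c = 4 * R * r * s) :
    a * b + b * c + c * a = s ^ 2 + r ^ 2 + 4 * R * r := by
  have h : s ^ 2 * (a * b + b * c + c * a) = s ^ 2 * (s ^ 2 + r ^ 2 + 4 * R * r) := by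
    linear_combination -hr - 2 * s ^ 3 * hs + s * habc
  exact mul_left_cancel₀ (pow_ne_zero 2 hs0) h

end TriangleIdentities

section Concyclic

variable {V : Type*} [NormedAddCommGroup V] [InnerProductSpace ℝ V] {x y z : V} {R a b c : ℝ}

theorem real_inner_eq_sq_sub_norm_sub_sq_div_two (hx : ‖x‖ = R) (hy : ‖y‖ = R) :
    ⟪x, y⟫ = R ^ 2 - ‖x - y‖ ^ 2 / 2 := by
  rw [real_inner_eq_norm_mul_self_add_norm_mul_self_sub_norm_sub_mul_self_div_two, hx, hy]
  ring

theorem gram_eq_of_norm_eq (hx : ‖x‖ = R) (hy : ‖y‖ = R) (hz : ‖z‖ = R)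
    (ha : ‖y - z‖ = a) (hb : ‖z - x‖ = b) (hc : ‖x - y‖ = c) :
    Matrix.gram ℝ ![x, y, z] =
      !![R ^ 2, R ^ 2 - c ^ 2 / 2, R ^ 2 - b ^ 2 / 2;
        R ^ 2 - c ^ 2 / 2, R ^ 2, R ^ 2 - a ^ 2 / 2;
        R ^ 2 - b ^ 2 / 2, R ^ 2 - a ^ 2 / 2, R ^ 2] := by
  have hnorm : ∀ i, ‖![x, y, z] i‖ = R := by
    intro i; fin_cases i <;> assumption
  ext i j
  rw [Matrix.gram_apply, real_inner_eq_sq_sub_norm_sub_sq_div_two (hnorm i) (hnorm j)]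
  fin_cases i <;> fin_cases j <;> simp [ha, hb, hc, norm_sub_rev x, norm_sub_rev y, norm_sub_rev z]

theorem inner_smul_add_smul_add_smul_of_norm_eq (hx : ‖x‖ = R) (hy : ‖y‖ = R) (hz : ‖z‖ = R)
    (ha : ‖y - z‖ = a) (hb : ‖z - x‖ = b) (hc : ‖x - y‖ = c) (α β γ α' β' γ' : ℝ) :
    ⟪α • x + β • y + γ • z, α' • x + β' • y + γ' • z⟫ =
      (α + β + γ) * (α' + β' + γ') * R ^ 2 -
        ((β * γ' + β' * γ) * a ^ 2 + (γ * α' + γ' * α) * b ^ 2 + (α * β' + α' * β) * c ^ 2) / 2 := by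
  have h := Matrix.star_dotProduct_gram_mulVec (𝕜 := ℝ) ![x, y, z] ![α, β, γ] ![α', β', γ']
  rw [gram_eq_of_norm_eq hx hy hz ha hb hc] at h
  simp only [dotProduct, Matrix.mulVec, Fin.sum_univ_three, Pi.star_apply, star_trivial,
    Matrix.of_apply, Matrix.cons_val_zero, Matrix.cons_val_one, Matrix.cons_val_two,
    Matrix.head_cons, Matrix.tail_cons] at h
  rw [← h]
  ring

theorem mul_mul_sq_eq_of_norm_eq [FiniteDimensional ℝ V] (hV : finrank ℝ V ≤ 2) {s : ℝ}
    (hx : ‖x‖ = R) (hy : ‖y‖ = R) (hz : ‖z‖ = R)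
    (ha : ‖y - z‖ = a) (hb : ‖z - x‖ = b) (hc : ‖x - y‖ = c) (hs : s = (a + b + c) / 2) :
    (a * b * c) ^ 2 = 16 * R ^ 2 * (s * (s - a) * (s - b) * (s - c)) := by
  have hdet : (Matrix.gram ℝ ![x, y, z]).det = 0 :=
    Matrix.det_gram_eq_zero_of_finrank_lt (by rw [Fintype.card_fin]; omega)
  rw [gram_eq_of_norm_eq hx hy hz ha hb hc, Matrix.det_fin_three] at hdet
  simp only [Matrix.of_apply, Matrix.cons_val', Matrix.cons_val_zero, Matrix.cons_val_one,
    Matrix.cons_val_two, Matrix.empty_val', Matrix.cons_val_fin_one, Matrix.tail_cons,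
    Matrix.head_cons, Matrix.head_fin_const] at hdet
  subst hs
  linear_combination -4 * hdet

theorem mul_mul_eq_and_mul_add_mul_add_mul_eq_of_norm_eq [FiniteDimensional ℝ V]
    (hV : finrank ℝ V ≤ 2) {s r : ℝ} (hx : ‖x‖ = R) (hy : ‖y‖ = R) (hz : ‖z‖ = R)
    (ha : ‖y - z‖ = a) (hb : ‖z - x‖ = b) (hc : ‖x - y‖ = c)
    (hs : s = (a + b + c) / 2) (hs0 : 0 < s) (hr : r = √(s * (s - a) * (s - b) * (s - c)) / s) :
    a * b * c = 4 * R * r * s ∧ a * b + b * c + c * a = s ^ 2 + r ^ 2 + 4 * R * r := by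
  subst ha hb hc
  have hH : 0 ≤ s * (s - ‖y - z‖) * (s - ‖z - x‖) * (s - ‖x - y‖) := by
    refine heron_nonneg ?_ ?_ ?_ hs <;>
      linarith [norm_sub_le_norm_sub_add_norm_sub x z y, norm_sub_le_norm_sub_add_norm_sub y x z,
        norm_sub_le_norm_sub_add_norm_sub z y x, norm_sub_rev x y, norm_sub_rev y z,
        norm_sub_rev z x]
  have habc := mul_mul_eq_four_mul_mul_mul (norm_nonneg _) (norm_nonneg _) (norm_nonneg _)
    (hx ▸ norm_nonneg _) hs0.ne' hr (mul_mul_sq_eq_of_norm_eq hV hx hy hz rfl rfl rfl hs)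
  have hrs : (r * s) ^ 2 = s * (s - ‖y - z‖) * (s - ‖z - x‖) * (s - ‖x - y‖) := by
    rw [hr, div_mul_cancel₀ _ hs0.ne', Real.sq_sqrt hH]
  exact ⟨habc, mul_add_mul_add_mul_eq hs hs0.ne' hrs habc⟩

end Concyclic

theorem stmt_16_general (A B C O G I : EuclideanSpace ℝ (Fin 2)) (a b c s S R r : ℝ)
    (hABC : AffineIndependent ℝ ![A, B, C])
    (ha : a = dist B C) (hb : b = dist C A) (hc : c = dist A B)
    (hs : s = (a + b + c) / 2)
    (hS : S = Real.sqrt (s * (s - a) * (s - b) * (s - c)))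
    (hr : r = S / s)
    (hOA : dist O A = R) (hOB : dist O B = R) (hOC : dist O C = R)
    (hG : ∀ M : EuclideanSpace ℝ (Fin 2),
      ((1 : ℝ) + 1 + 1) • (G - M) = (1 : ℝ) • (A - M) + (1 : ℝ) • (B - M) + (1 : ℝ) • (C - M))
    (hI : ∀ M : EuclideanSpace ℝ (Fin 2),
      (a + b + c) • (I - M) = a • (A - M) + b • (B - M) + c • (C - M)) :
    Real.cos (∠ G O I) =
      (6 * R ^ 2 - s ^ 2 - r ^ 2 + 2 * R * r) /
        (2 * Real.sqrt (9 * R ^ 2 - 2 * s ^ 2 + 2 * r ^ 2 + 8 * R * r) *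
          Real.sqrt (R ^ 2 - 2 * R * r)) := by
  subst hS
  obtain ⟨hx, hy, hz⟩ : ‖A - O‖ = R ∧ ‖B - O‖ = R ∧ ‖C - O‖ = R := by
    simp only [← dist_eq_norm, dist_comm _ O]; exact ⟨hOA, hOB, hOC⟩
  obtain ⟨ha', hb', hc'⟩ : ‖(B - O) - (C - O)‖ = a ∧ ‖(C - O) - (A - O)‖ = b ∧
      ‖(A - O) - (B - O)‖ = c := by
    simp only [sub_sub_sub_cancel_right, ← dist_eq_norm]; exact ⟨ha.symm, hb.symm, hc.symm⟩
  have hc0 : 0 < c := hc ▸ dist_pos.2 (hABC.injective.ne (show (0 : Fin 3) ≠ 1 by decide))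
  have hs0 : 0 < s := by rw [hs, ha, hb]; positivity
  obtain ⟨habc, hq⟩ := mul_mul_eq_and_mul_add_mul_add_mul_eq_of_norm_eq (by simp) hx hy hz
    ha' hb' hc' hs hs0 hr
  have hinner := inner_smul_add_smul_add_smul_of_norm_eq hx hy hz ha' hb' hc'
  have hangle : ∠ G O I = InnerProductGeometry.angle
      ((1 : ℝ) • (A - O) + (1 : ℝ) • (B - O) + (1 : ℝ) • (C - O))
      (a • (A - O) + b • (B - O) + c • (C - O)) := by
    rw [← hG O, ← hI O, InnerProductGeometry.angle_smul_left_of_pos _ _ (by norm_num),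
      InnerProductGeometry.angle_smul_right_of_pos _ _ (by linarith)]
    rfl
  set u := (1 : ℝ) • (A - O) + (1 : ℝ) • (B - O) + (1 : ℝ) • (C - O)
  set v := a • (A - O) + b • (B - O) + c • (C - O)
  have huv : ⟪u, v⟫ = s * (6 * R ^ 2 - s ^ 2 - r ^ 2 + 2 * R * r) := by
    rw [hinner]
    linear_combination (a * b + b * c + c * a - 6 * R ^ 2) * hs - s * hq + 3 / 2 * habc
  have huu : ⟪u, u⟫ = 9 * R ^ 2 - 2 * s ^ 2 + 2 * r ^ 2 + 8 * R * r := by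
    rw [hinner]
    linear_combination 2 * (2 * s + a + b + c) * hs + 2 * hq
  have hvv : ⟪v, v⟫ = (2 * s) ^ 2 * (R ^ 2 - 2 * R * r) := by
    rw [hinner]
    linear_combination (8 * R * r * s - 2 * (2 * s + a + b + c) * R ^ 2) * hs - (a + b + c) * habc
  rw [hangle, InnerProductGeometry.cos_angle, norm_eq_sqrt_real_inner, norm_eq_sqrt_real_inner,
    huv, huu, hvv, Real.sqrt_mul (sq_nonneg _), Real.sqrt_sq (by positivity)]
  field_simp

/-- in a nondegenerate non-equilateral triangle with circumcenter `O`,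
circumradius `R`, inradius `r`, semiperimeter `s`, centroid `G` and incenter `I`,
`cos ∠GOI = (6R² − s² − r² + 2Rr)/(2·√(9R² − 2s² + 2r² + 8Rr)·√(R² − 2Rr))`. -/
theorem stmt_16 (A B C O G I : EuclideanSpace ℝ (Fin 2)) (a b c s S R r : ℝ)
    (hABC : AffineIndependent ℝ ![A, B, C])
    (ha : a = dist B C) (hb : b = dist C A) (hc : c = dist A B)
    (hs : s = (a + b + c) / 2)
    (hS : S = Real.sqrt (s * (s - a) * (s - b) * (s - c)))
    (hr : r = S / s)
    (hOA : dist O A = R) (hOB : dist O B = R) (hOC : dist O C = R)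
    (hG : ∀ M : EuclideanSpace ℝ (Fin 2),
      ((1 : ℝ) + 1 + 1) • (G - M) = (1 : ℝ) • (A - M) + (1 : ℝ) • (B - M) + (1 : ℝ) • (C - M))
    (hI : ∀ M : EuclideanSpace ℝ (Fin 2),
      (a + b + c) • (I - M) = a • (A - M) + b • (B - M) + c • (C - M))
    (hne : ¬(a = b ∧ b = c)) :
    Real.cos (∠ G O I) =
      (6 * R ^ 2 - s ^ 2 - r ^ 2 + 2 * R * r) /
        (2 * Real.sqrt (9 * R ^ 2 - 2 * s ^ 2 + 2 * r ^ 2 + 8 * R * r) *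
          Real.sqrt (R ^ 2 - 2 * R * r)) :=
  stmt_16_general A B C O G I a b c s S R r hABC ha hb hc hs hS hr hOA hOB hOC hG hI
end
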